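/- For the attention computation in SESA with values, let S_{Q,t} = ∑_{s≤t} Q_s and S_{K,t} = ∑_{s≤t} K_s, let O_t = S_{Q,t}K_tᵀ + Q_t S_{K,t}ᵀ − Q_t K_tᵀ and A = ∑_{t=0}^T O_t, and with accumulators S_{A,t} = ∑_{s≤t} O_s and S_{V,t} = ∑_{s≤t} V_s define B_t = S_{A,t}·V_t + O_t·S_{V,t} − O_t·V_t; then ∑_{t=0}^T B_t = (∑_{t=0}^T Q_t)(∑_{t=0}^T K_t)ᵀ(∑_{t=0}^T V_t). -/

import Mathlib

open Matrix in
lemma aa_mul {α β γ : Type*} [Fintype β] [DecidableEq β]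
    (A : ℕ → Matrix α β ℝ) (C : ℕ → Matrix β γ ℝ) (T : ℕ) :
    ∑ t ∈ Finset.range (T + 1),
      ((∑ s ∈ Finset.range (t + 1), A s) * C t
        + A t * (∑ s ∈ Finset.range (t + 1), C s)
        - A t * C t) =
      (∑ t ∈ Finset.range (T + 1), A t) * (∑ t ∈ Finset.range (T + 1), C t) := by
  induction T with
  | zero => simp
  | succ T ih =>
    rw [Finset.sum_range_succ, ih, Finset.sum_range_succ A (T+1),
      Finset.sum_range_succ C (T+1)]
    simp only [Matrix.add_mul, Matrix.mul_add]
    abel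


open Matrix in
/-- Composing the AA-multiplication identity twice yields full spiking attention. -/
theorem sesa_with_values
    (n d T : ℕ)
    (Q K V : ℕ → Matrix (Fin n) (Fin d) ℝ)
    (SQ SK : ℕ → Matrix (Fin n) (Fin d) ℝ)
    (SV : ℕ → Matrix (Fin n) (Fin d) ℝ)
    (O SA : ℕ → Matrix (Fin n) (Fin n) ℝ)
    (B : ℕ → Matrix (Fin n) (Fin d) ℝ)
    (hSQ : ∀ t, SQ t = ∑ s ∈ Finset.range (t + 1), Q s)
    (hSK : ∀ t, SK t = ∑ s ∈ Finset.range (t + 1), K s)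
    (hSV : ∀ t, SV t = ∑ s ∈ Finset.range (t + 1), V s)
    (hO : ∀ t, O t = SQ t * (K t)ᵀ + Q t * (SK t)ᵀ - Q t * (K t)ᵀ)
    (hSA : ∀ t, SA t = ∑ s ∈ Finset.range (t + 1), O s)
    (hB : ∀ t, B t = SA t * V t + O t * SV t - O t * V t) :
    ∑ t ∈ Finset.range (T + 1), B t =
      (∑ t ∈ Finset.range (T + 1), Q t) * (∑ t ∈ Finset.range (T + 1), K t)ᵀ *
        (∑ t ∈ Finset.range (T + 1), V t) := by
  have hOsum : ∀ T, ∑ t ∈ Finset.range (T + 1), O t =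
      (∑ t ∈ Finset.range (T + 1), Q t) * (∑ t ∈ Finset.range (T + 1), K t)ᵀ := by
    intro T
    have := aa_mul Q (fun t => (K t)ᵀ) T
    rw [Matrix.transpose_sum]
    rw [← this]
    refine Finset.sum_congr rfl fun t _ => ?_
    rw [hO, hSQ, hSK, Matrix.transpose_sum]
  have := aa_mul O V T
  calc ∑ t ∈ Finset.range (T + 1), B t
      = ∑ t ∈ Finset.range (T + 1),
        ((∑ s ∈ Finset.range (t + 1), O s) * V t
          + O t * (∑ s ∈ Finset.range (t + 1), V s) - O t * V t) := by
        refine Finset.sum_congr rfl fun t _ => ?_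
        rw [hB, hSA, hSV]
    _ = (∑ t ∈ Finset.range (T + 1), O t) * (∑ t ∈ Finset.range (T + 1), V t) := this
    _ = _ := by rw [hOsum]
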